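/- arXiv:2106.05413 — 8 statements merged into one kernel-verified Lean document; each statement's English description precedes it below -/
import Mathlib

section
/- For every real number C, the integral ℓ_C := ∫_1^{√(1+e^{2C})} du / √(2C − log(u² − 1)) is finite and positive. -/
open MeasureTheory intervalIntegral Real

theorem ell_finite_and_positive (C : ℝ) :
    IntervalIntegrable
      (fun u : ℝ => (Real.sqrt (2 * C - Real.log (u ^ 2 - 1)))⁻¹)
      volume 1 (Real.sqrt (1 + Real.exp (2 * C))) ∧
    0 < ∫ u in (1 : ℝ)..Real.sqrt (1 + Real.exp (2 * C)),
        (Real.sqrt (2 * C - Real.log (u ^ 2 - 1)))⁻¹ := by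
  set b := Real.sqrt (1 + Real.exp (2 * C)) with hb
  have hb2 : b ^ 2 = 1 + Real.exp (2 * C) := Real.sq_sqrt (by positivity)
  have hb1 : 1 < b := by
    nlinarith [Real.exp_pos (2 * C), Real.sqrt_nonneg (1 + Real.exp (2 * C))]
  set K : ℝ := (Real.sqrt (2 * Real.exp (-(2 * C))))⁻¹ with hK
  have hKpos : 0 < K := by
    rw [hK]
    positivity
  -- key lower bound
  have key : ∀ x : ℝ, 1 < x → x ≤ b → 2 * Real.exp (-(2 * C)) * (b - x) ≤
      2 * C - Real.log (x ^ 2 - 1) := by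
    intro x hx hxb
    have hx2 : 0 < x ^ 2 - 1 := by nlinarith
    have hy : 0 < (x ^ 2 - 1) * Real.exp (-(2 * C)) := by positivity
    have hlog := Real.log_le_sub_one_of_pos hy
    rw [Real.log_mul (ne_of_gt hx2) (Real.exp_ne_zero _), Real.log_exp] at hlog
    have hE : Real.exp (-(2 * C)) * Real.exp (2 * C) = 1 := by
      rw [← Real.exp_add]; simp
    -- 2C - log(x²-1) ≥ (b² - x²) e^{-2C} ≥ 2(b-x)e^{-2C}
    have h1 : (b ^ 2 - x ^ 2) * Real.exp (-(2 * C)) ≤ 2 * C - Real.log (x ^ 2 - 1) := by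
      nlinarith [Real.exp_pos (-(2 * C))]
    nlinarith [Real.exp_pos (-(2 * C)),
      mul_nonneg (mul_nonneg (Real.exp_pos (-(2 * C))).le (sub_nonneg.2 hxb))
        (by linarith : (0:ℝ) ≤ b + x - 2)]
  have hint : IntervalIntegrable
      (fun u : ℝ => (Real.sqrt (2 * C - Real.log (u ^ 2 - 1)))⁻¹) volume 1 b := by
    have hg0 : IntervalIntegrable (fun x : ℝ => x ^ (-(1/2) : ℝ)) volume 0 (b - 1) :=
      intervalIntegrable_rpow' (by norm_num)
    have hg1 := (hg0.comp_sub_left b).const_mul K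
    simp only [sub_zero, sub_sub_cancel] at hg1
    apply hg1.symm.mono_fun
    · refine Measurable.aestronglyMeasurable (Measurable.inv ?_)
      exact Real.continuous_sqrt.measurable.comp
        (measurable_const.sub
          (Real.measurable_log.comp ((measurable_id.pow_const 2).sub measurable_const)))
    · rw [Filter.EventuallyLE, Set.uIoc_of_le hb1.le, ae_restrict_iff' measurableSet_Ioc]
      filter_upwards with x hx
      have hx1 := hx.1
      rcases eq_or_lt_of_le hx.2 with heq | hlt
      · have : x ^ 2 - 1 = Real.exp (2 * C) := by rw [heq]; linarith [hb2]
        simp [this, Real.log_exp]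
        positivity
      · have hbx : 0 < b - x := by linarith
        have ht : 0 < 2 * C - Real.log (x ^ 2 - 1) :=
          lt_of_lt_of_le (mul_pos (by positivity) hbx) (key x hx1 hx.2)
        have hs : Real.sqrt (2 * Real.exp (-(2 * C))) * Real.sqrt (b - x) ≤
            Real.sqrt (2 * C - Real.log (x ^ 2 - 1)) := by
          rw [← Real.sqrt_mul (by positivity)]
          exact Real.sqrt_le_sqrt (key x hx1 hx.2)
        have hspos : 0 < Real.sqrt (2 * Real.exp (-(2 * C))) * Real.sqrt (b - x) := by
          positivity
        have hfle : (Real.sqrt (2 * C - Real.log (x ^ 2 - 1)))⁻¹ ≤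
            (Real.sqrt (2 * Real.exp (-(2 * C))) * Real.sqrt (b - x))⁻¹ :=
          inv_anti₀ hspos hs
        have hrw : (b - x) ^ (-(1/2) : ℝ) = (Real.sqrt (b - x))⁻¹ := by
          rw [Real.rpow_neg hbx.le, Real.sqrt_eq_rpow]
        rw [Real.norm_eq_abs, Real.norm_eq_abs, abs_of_nonneg (by positivity),
          abs_of_nonneg (by rw [hrw]; positivity), hrw, mul_inv] at *
        exact hfle
  refine ⟨hint, intervalIntegral_pos_of_pos_on hint ?_ hb1⟩
  intro x hx
  have hx2 : 0 < x ^ 2 - 1 := by nlinarith [hx.1]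
  have hbx : 0 < b - x := sub_pos.2 hx.2
  have ht : 0 < 2 * C - Real.log (x ^ 2 - 1) :=
    lt_of_lt_of_le (mul_pos (by positivity) hbx) (key x hx.1 hx.2.le)
  positivity
end

section
/- The function C ↦ ℓ_C defined by ℓ_C = ∫_1^{√(1+e^{2C})} du / √(2C − log(u² − 1)) is strictly increasing on ℝ, and its derivative satisfies dℓ_C/dC = ∫_1^{√(1+e^{2C})} (1+u²)/(u² √(2C − log(u² − 1))) du > 0. -/
open MeasureTheory intervalIntegral Real

/-- Half-length of the head of the singular solitary wave. -/
noncomputable def ell (C : ℝ) : ℝ :=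
  ∫ u in (1 : ℝ)..Real.sqrt (1 + Real.exp (2 * C)),
    (Real.sqrt (2 * C - Real.log (u ^ 2 - 1)))⁻¹

/-- The candidate derivative of `ell`. -/
noncomputable def ellDeriv (C : ℝ) : ℝ :=
  ∫ u in (1 : ℝ)..Real.sqrt (1 + Real.exp (2 * C)),
    (1 + u ^ 2) / (u ^ 2 * Real.sqrt (2 * C - Real.log (u ^ 2 - 1)))

/-! Substituting `u = √(1 + e^{2C} v)` maps `(0, 1]` onto `(1, √(1 + e^{2C})]` and turns
`2C - log (u² - 1)` into `-log v`. Hence `ℓ_C = L (e^{2C})` with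
`L a = ellOfExp a = ∫₀¹ a / (2√(1 + a v)) · (-log v)^{-1/2} dv`: the parameter now sits in a
smooth kernel with bounded `a`-derivative `(2 + a v) / (4 (1 + a v)^{3/2}) > 0`, while the
singular factor is integrable since `-log v ≥ 1 - v`. Differentiating under the integral sign
gives `L' > 0`, and undoing the substitution in `2 e^{2C} L' (e^{2C})` gives the stated
integral. -/

open Set Filter Metric

theorem hasDerivAt_integral_mul_of_bounded {α : Type*} [MeasurableSpace α] {μ : Measure α}
    {w : α → ℝ} (hw : Integrable w μ) {F F' : ℝ → α → ℝ} {x₀ ε M : ℝ} (hε : 0 < ε)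
    (hF_meas : ∀ x ∈ ball x₀ ε, AEStronglyMeasurable (F x) μ)
    (hF'_meas : AEStronglyMeasurable (F' x₀) μ)
    (hF_bound : ∀ᵐ t ∂μ, ‖F x₀ t‖ ≤ M)
    (hF'_bound : ∀ᵐ t ∂μ, ∀ x ∈ ball x₀ ε, ‖F' x t‖ ≤ M)
    (h_diff : ∀ᵐ t ∂μ, ∀ x ∈ ball x₀ ε, HasDerivAt (F · t) (F' x t) x) :
    Integrable (fun t => F' x₀ t * w t) μ ∧
      HasDerivAt (fun x => ∫ t, F x t * w t ∂μ) (∫ t, F' x₀ t * w t ∂μ) x₀ :=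
  hasDerivAt_integral_of_dominated_loc_of_deriv_le (bound := fun t => M * ‖w t‖)
    (ball_mem_nhds x₀ hε)
    (eventually_of_mem (ball_mem_nhds x₀ hε) fun x hx => (hF_meas x hx).mul hw.1)
    (hw.bdd_mul (hF_meas x₀ (mem_ball_self hε)) hF_bound) (hF'_meas.mul hw.1)
    (by
      filter_upwards [hF'_bound] with t ht x hx
      rw [norm_mul]
      exact mul_le_mul_of_nonneg_right (ht x hx) (norm_nonneg _))
    (hw.norm.const_mul M)
    (by
      filter_upwards [h_diff] with t ht x hx
      exact (ht x hx).mul_const (w t))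

theorem integrableOn_inv_sqrt_neg_log : IntegrableOn (fun v : ℝ => (√(-log v))⁻¹) (Ioc 0 1) := by
  have hdom : IntegrableOn (fun v : ℝ => (1 - v) ^ (-(1 / 2) : ℝ)) (Ioc 0 1) := by
    rw [← intervalIntegrable_iff_integrableOn_Ioc_of_le zero_le_one]
    simpa using ((intervalIntegrable_rpow' (by norm_num) (a := 0) (b := 1)).comp_sub_left 1).symm
  rw [integrableOn_Ioc_iff_integrableOn_Ioo] at hdom ⊢
  refine hdom.mono' (by fun_prop) ?_
  filter_upwards [ae_restrict_mem measurableSet_Ioo] with v ⟨hv0, hv1⟩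
  have h1v : 0 < 1 - v := by linarith
  rw [norm_of_nonneg (by positivity), rpow_neg h1v.le, ← sqrt_eq_rpow]
  exact inv_anti₀ (sqrt_pos.2 h1v) (sqrt_le_sqrt (by linarith [log_le_sub_one_of_pos hv0]))

theorem hasDerivAt_sqrt_one_add_mul {a v : ℝ} (h : 0 < 1 + a * v) :
    HasDerivAt (fun v => √(1 + a * v)) (a / (2 * √(1 + a * v))) v := by
  simpa using (((hasDerivAt_id v).const_mul a).const_add 1).sqrt h.ne'

theorem hasDerivAt_div_two_sqrt_one_add_mul {a v : ℝ} (h : 0 < 1 + a * v) :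
    HasDerivAt (fun a => a / (2 * √(1 + a * v)))
      ((2 + a * v) / (4 * (1 + a * v) * √(1 + a * v))) a := by
  have hs : 0 < √(1 + a * v) := sqrt_pos.2 h
  have hd := (hasDerivAt_id a).div
    (HasDerivAt.const_mul 2 ((((hasDerivAt_id a).mul_const v).const_add 1).sqrt h.ne'))
    (by positivity)
  refine hd.congr_deriv ?_
  simp only [id, one_mul]
  field_simp
  rw [sq_sqrt h.le]
  ring

theorem image_sqrt_one_add_mul_Ioc {a : ℝ} (ha : 0 < a) :
    (fun v => √(1 + a * v)) '' Ioc 0 1 = Ioc 1 √(1 + a) := by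
  ext u
  constructor
  · rintro ⟨v, ⟨hv0, hv1⟩, rfl⟩
    exact ⟨lt_sqrt_of_sq_lt (by nlinarith [mul_pos ha hv0]),
      sqrt_le_sqrt (by nlinarith [mul_le_mul_of_nonneg_left hv1 ha.le])⟩
  · rintro ⟨hu1, hua⟩
    have hu2 : u ^ 2 ≤ 1 + a := by
      nlinarith [sq_sqrt (show 0 ≤ 1 + a by positivity), sqrt_nonneg (1 + a)]
    refine ⟨(u ^ 2 - 1) / a, ⟨div_pos (by nlinarith) ha, (div_le_one ha).2 (by linarith)⟩, ?_⟩
    dsimp only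
    rw [mul_div_cancel₀ _ ha.ne', add_sub_cancel, sqrt_sq (by linarith)]

theorem setIntegral_Ioc_one_sqrt_one_add {a : ℝ} (ha : 0 < a) (g : ℝ → ℝ) :
    ∫ u in Ioc 1 √(1 + a), g u =
      ∫ v in Ioc 0 1, a / (2 * √(1 + a * v)) * g √(1 + a * v) := by
  have hpos : ∀ v ∈ Ioc (0 : ℝ) 1, 0 < 1 + a * v := fun v hv => by nlinarith [mul_pos ha hv.1]
  have hmono : StrictMonoOn (fun v => √(1 + a * v)) (Ioc 0 1) := fun v hv w hw hvw =>
    sqrt_lt_sqrt (hpos v hv).le (by nlinarith)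
  rw [← image_sqrt_one_add_mul_Ioc ha, integral_image_eq_integral_abs_deriv_smul measurableSet_Ioc
    (fun v hv => (hasDerivAt_sqrt_one_add_mul (hpos v hv)).hasDerivWithinAt) hmono.injOn]
  refine setIntegral_congr_fun measurableSet_Ioc fun v hv => ?_
  have : 0 < √(1 + a * v) := sqrt_pos.2 (hpos v hv)
  rw [smul_eq_mul, abs_of_pos (by positivity)]

theorem two_mul_sub_log_sq_sqrt_one_add_exp_mul_sub_one (C : ℝ) {v : ℝ} (hv : 0 < v) :
    2 * C - log (√(1 + exp (2 * C) * v) ^ 2 - 1) = -log v := by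
  rw [sq_sqrt (by positivity), add_sub_cancel_left, log_mul (exp_ne_zero _) hv.ne', log_exp]
  ring

noncomputable def ellOfExp (a : ℝ) : ℝ :=
  ∫ v in Ioc 0 1, a / (2 * √(1 + a * v)) * (√(-log v))⁻¹

noncomputable def ellOfExpDeriv (a : ℝ) : ℝ :=
  ∫ v in Ioc 0 1, (2 + a * v) / (4 * (1 + a * v) * √(1 + a * v)) * (√(-log v))⁻¹

theorem one_le_sqrt_one_add_exp (x : ℝ) : 1 ≤ √(1 + exp x) :=
  one_le_sqrt.2 (by linarith [exp_pos x])

theorem ell_eq_ellOfExp (C : ℝ) : ell C = ellOfExp (exp (2 * C)) := by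
  rw [ell, integral_of_le (one_le_sqrt_one_add_exp _),
    setIntegral_Ioc_one_sqrt_one_add (exp_pos _)]
  refine setIntegral_congr_fun measurableSet_Ioc fun v hv => ?_
  rw [two_mul_sub_log_sq_sqrt_one_add_exp_mul_sub_one C hv.1]

theorem ellDeriv_eq_ellOfExpDeriv (C : ℝ) :
    ellDeriv C = ellOfExpDeriv (exp (2 * C)) * (exp (2 * C) * 2) := by
  rw [ellDeriv, ellOfExpDeriv, integral_of_le (one_le_sqrt_one_add_exp _),
    setIntegral_Ioc_one_sqrt_one_add (exp_pos _), ← MeasureTheory.integral_mul_const]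
  refine setIntegral_congr_fun measurableSet_Ioc fun v hv => ?_
  have hpos : 0 < 1 + exp (2 * C) * v := by have := hv.1; positivity
  have hs : 0 < √(1 + exp (2 * C) * v) := sqrt_pos.2 hpos
  rw [two_mul_sub_log_sq_sqrt_one_add_exp_mul_sub_one C hv.1, sq_sqrt hpos.le]
  field_simp
  ring

theorem integrableOn_and_hasDerivAt_ellOfExp {a : ℝ} (ha : 0 < a) :
    IntegrableOn (fun v => (2 + a * v) / (4 * (1 + a * v) * √(1 + a * v)) * (√(-log v))⁻¹)
        (Ioc 0 1) ∧
      HasDerivAt ellOfExp (ellOfExpDeriv a) a := by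
  have hpos : ∀ x ∈ ball a a, ∀ v ∈ Ioc (0 : ℝ) 1, 0 < x * v := fun x hx v hv => by
    rw [mem_ball, dist_eq, abs_lt] at hx
    exact mul_pos (by linarith) hv.1
  refine hasDerivAt_integral_mul_of_bounded (F := fun x v => x / (2 * √(1 + x * v)))
    (F' := fun x v => (2 + x * v) / (4 * (1 + x * v) * √(1 + x * v))) (M := a + 1)
    integrableOn_inv_sqrt_neg_log ha (fun x _ => (by fun_prop : Measurable _).aestronglyMeasurable)
    (by fun_prop : Measurable _).aestronglyMeasurable ?_ ?_ ?_
  · filter_upwards [ae_restrict_mem measurableSet_Ioc] with v hv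
    have hs : 1 ≤ √(1 + a * v) := one_le_sqrt.2 (by nlinarith [mul_pos ha hv.1])
    rw [norm_of_nonneg (by positivity), div_le_iff₀ (by positivity)]
    nlinarith
  · filter_upwards [ae_restrict_mem measurableSet_Ioc] with v hv x hx
    have hxv := hpos x hx v hv
    have hs : 1 ≤ √(1 + x * v) := one_le_sqrt.2 (by linarith)
    rw [norm_of_nonneg (by positivity), div_le_iff₀ (by positivity)]
    calc 2 + x * v ≤ 4 * (1 + x * v) * √(1 + x * v) := by nlinarith
      _ ≤ (a + 1) * (4 * (1 + x * v) * √(1 + x * v)) :=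
        le_mul_of_one_le_left (by positivity) (by linarith)
  · filter_upwards [ae_restrict_mem measurableSet_Ioc] with v hv x hx
    exact hasDerivAt_div_two_sqrt_one_add_mul (by linarith [hpos x hx v hv])

theorem ellOfExpDeriv_pos {a : ℝ} (ha : 0 < a) : 0 < ellOfExpDeriv a := by
  rw [ellOfExpDeriv, ← integral_of_le zero_le_one]
  refine intervalIntegral_pos_of_pos_on ((intervalIntegrable_iff_integrableOn_Ioc_of_le
    zero_le_one).2 (integrableOn_and_hasDerivAt_ellOfExp ha).1) (fun v ⟨hv0, hv1⟩ => ?_) zero_lt_one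
  have : 0 < -log v := neg_pos.2 (log_neg hv0 hv1)
  positivity

theorem hasDerivAt_ell (C : ℝ) : HasDerivAt ell (ellDeriv C) C := by
  have hexp : HasDerivAt (fun C => exp (2 * C)) (exp (2 * C) * 2) C := by
    simpa using ((hasDerivAt_id C).const_mul 2).exp
  rw [ellDeriv_eq_ellOfExpDeriv, funext ell_eq_ellOfExp]
  exact (integrableOn_and_hasDerivAt_ellOfExp (exp_pos _)).2.comp
    (h := fun C => exp (2 * C)) C hexp

theorem ellDeriv_pos (C : ℝ) : 0 < ellDeriv C := by
  rw [ellDeriv_eq_ellOfExpDeriv]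
  have := ellOfExpDeriv_pos (exp_pos (2 * C))
  positivity

theorem ell_strictMono_and_deriv :
    StrictMono ell ∧ ∀ C : ℝ, HasDerivAt ell (ellDeriv C) C ∧ 0 < ellDeriv C :=
  ⟨strictMono_of_deriv_pos fun C => (hasDerivAt_ell C).deriv ▸ ellDeriv_pos C,
    fun C => ⟨hasDerivAt_ell C, ellDeriv_pos C⟩⟩
end

section
/- ℓ_C → 0 as C → −∞, where ℓ_C = ∫_1^{√(1+e^{2C})} du / √(2C − log(u² − 1)). -/
/-! Write `e = exp (2C)` and `b = √(1 + e)`. Since `log x ≤ x - 1`, the radicand satisfies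
`log e - log (u² - 1) ≥ 1 - (u² - 1)/e = (b² - u²)/e ≥ 2(b - u)/e`, so the integrand is at most
`√(e/2) (b - u)^(-1/2)`, whose integral over `[1, b]` is `2√(e/2) √(b - 1) ≤ e`,
because `b - 1 ≤ e/2`. Hence `|ℓ_C| ≤ exp (2C) → 0`. -/

open MeasureTheory intervalIntegral Real Filter

lemma intervalIntegrable_sub_rpow (a b : ℝ) {r : ℝ} (hr : -1 < r) :
    IntervalIntegrable (fun u => (b - u) ^ r) volume a b := by
  simpa using
    ((intervalIntegral.intervalIntegrable_rpow' hr (a := 0) (b := b - a)).comp_sub_left b).symm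

lemma integral_sub_rpow (a b : ℝ) {r : ℝ} (hr : -1 < r) :
    ∫ u in a..b, (b - u) ^ r = (b - a) ^ (r + 1) / (r + 1) := by
  rw [intervalIntegral.integral_comp_sub_left (fun x => x ^ r) b, sub_self,
    integral_rpow (Or.inl hr), zero_rpow (by linarith), sub_zero]

lemma two_mul_sub_div_le_log_sub_log {e u : ℝ} (he : 0 < e) (hu : 1 < u)
    (hub : u ≤ √(1 + e)) : 2 * (√(1 + e) - u) / e ≤ log e - log (u ^ 2 - 1) := by
  set b := √(1 + e)
  have hb : b ^ 2 = 1 + e := sq_sqrt (by positivity)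
  have hu2 : 0 < u ^ 2 - 1 := by nlinarith
  have hlog : 1 - (u ^ 2 - 1) / e ≤ log e - log (u ^ 2 - 1) := by
    simpa [log_div he.ne' hu2.ne'] using one_sub_inv_le_log_of_pos (div_pos he hu2)
  refine le_trans ?_ hlog
  rw [div_le_iff₀ he, sub_mul, div_mul_cancel₀ _ he.ne']
  nlinarith

lemma inv_sqrt_log_sub_log_le {e u : ℝ} (he : 0 < e) (hu : 1 < u) (hub : u ≤ √(1 + e)) :
    (√(log e - log (u ^ 2 - 1)))⁻¹ ≤ √(e / 2) * (√(1 + e) - u) ^ (-(1 / 2) : ℝ) := by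
  rcases hub.eq_or_lt with rfl | hlt
  -- at `u = √(1 + e)` both sides are `0`, by the conventions `0⁻¹ = 0` and `0 ^ (-1/2) = 0`
  · simp [sq_sqrt (by positivity : (0 : ℝ) ≤ 1 + e)]
  · have hbu : 0 < √(1 + e) - u := sub_pos.2 hlt
    calc (√(log e - log (u ^ 2 - 1)))⁻¹
        ≤ (√(2 * (√(1 + e) - u) / e))⁻¹ :=
          inv_anti₀ (sqrt_pos.2 (by positivity))
            (sqrt_le_sqrt (two_mul_sub_div_le_log_sub_log he hu hub))
      _ = √(e / 2) * (√(1 + e) - u) ^ (-(1 / 2) : ℝ) := by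
          rw [rpow_neg hbu.le, ← sqrt_eq_rpow, ← sqrt_inv, ← sqrt_inv, ← sqrt_mul (by positivity)]
          congr 1
          field_simp

lemma norm_integral_inv_sqrt_log_sub_log_le {e : ℝ} (he : 0 < e) :
    ‖∫ u in (1 : ℝ)..√(1 + e), (√(log e - log (u ^ 2 - 1)))⁻¹‖ ≤ e := by
  have hb : 1 ≤ √(1 + e) := one_le_sqrt.2 (by linarith)
  have hb1 : √(1 + e) - 1 ≤ e / 2 := by
    rw [sub_le_iff_le_add, sqrt_le_left (by positivity)]
    nlinarith
  calc _ ≤ ∫ u in (1 : ℝ)..√(1 + e), √(e / 2) * (√(1 + e) - u) ^ (-(1 / 2) : ℝ) :=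
        norm_integral_le_of_norm_le hb
          (ae_of_all _ fun u hu => by
            rw [norm_of_nonneg (by positivity)]
            exact inv_sqrt_log_sub_log_le he hu.1 hu.2)
          ((intervalIntegrable_sub_rpow _ _ (by norm_num)).const_mul _)
    _ = 2 * √(e / 2) * √(√(1 + e) - 1) := by
        rw [intervalIntegral.integral_const_mul, integral_sub_rpow _ _ (by norm_num),
          show (-(1 / 2) : ℝ) + 1 = 1 / 2 by norm_num, ← sqrt_eq_rpow]
        ring
    _ ≤ 2 * √(e / 2) * √(e / 2) := by gcongr
    _ = e := by
        rw [mul_assoc, mul_self_sqrt (by positivity)]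
        ring

theorem ell_tendsto_zero_atBot :
    Filter.Tendsto ell Filter.atBot (nhds 0) := by
  have hbound (C : ℝ) : ‖ell C‖ ≤ exp (2 * C) := by
    simpa [ell, log_exp] using norm_integral_inv_sqrt_log_sub_log_le (exp_pos (2 * C))
  refine squeeze_zero_norm hbound ?_
  exact tendsto_exp_atBot.comp (tendsto_id.const_mul_atBot two_pos)
end

section
/- ℓ_C → ∞ as C → +∞, where ℓ_C = ∫_1^{√(1+e^{2C})} du / √(2C − log(u² − 1)). -/
open MeasureTheory intervalIntegral Real Filter

/-! On `[e^C / 2, e^C]` the quantity `2C - log (u² - 1)` lies in `(0, 2C]`, so the integrand is at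
least `1 / √(2C)` on an interval of length `e^C / 2`; hence `ℓ_C ≥ e^C / (2√(2C)) → ∞`. The only
delicate point is that the integrand blows up at the upper endpoint `B = √(1 + e^{2C})`, where
`2C - log (u² - 1)` vanishes; it does so linearly in `B - u` (by `log x ≤ x - 1`), so the
singularity is of type `(B - u)^{-1/2}` and integrable. -/

lemma mul_sub_le_sub_log_sq_sub_one {L B u : ℝ} (hB : B ^ 2 = 1 + exp L) (hu : 1 < u)
    (huB : u ≤ B) : 2 * exp (-L) * (B - u) ≤ L - log (u ^ 2 - 1) := by
  have hu2 : 0 < u ^ 2 - 1 := by nlinarith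
  have hlog : log (u ^ 2 - 1) - L ≤ (u ^ 2 - 1) / exp L - 1 := by
    simpa [log_div hu2.ne' (exp_pos L).ne'] using log_le_sub_one_of_pos (div_pos hu2 (exp_pos L))
  have hdiff : (u ^ 2 - 1) / exp L - 1 = -((B - u) * (B + u)) * exp (-L) := by
    rw [exp_neg, div_eq_mul_inv]
    field_simp
    linear_combination hB
  have hBu : 2 * (B - u) ≤ (B - u) * (B + u) := by nlinarith
  nlinarith [exp_pos (-L)]

lemma intervalIntegrable_inv_sqrt_of_mul_sub_le {f : ℝ → ℝ} {a b c : ℝ} (hab : a ≤ b)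
    (hc : 0 < c) (hf : Measurable f) (hle : ∀ u ∈ Set.Ioo a b, c * (b - u) ≤ f u) :
    IntervalIntegrable (fun u => (√(f u))⁻¹) volume a b := by
  have hsing : IntervalIntegrable (fun u => (√c)⁻¹ * (b - u) ^ (-(1 / 2) : ℝ)) volume a b := by
    have h := (intervalIntegrable_rpow' (a := b - a) (b := 0) (r := (-(1 / 2) : ℝ))
      (by norm_num)).comp_sub_left b
    simp only [sub_sub_cancel, sub_zero] at h
    exact h.const_mul _
  rw [intervalIntegrable_iff_integrableOn_Ioo_of_le hab] at hsing ⊢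
  refine hsing.mono' (by fun_prop) (ae_restrict_of_forall_mem measurableSet_Ioo fun u hu => ?_)
  have hbu : 0 < b - u := sub_pos.2 hu.2
  rw [norm_inv, norm_of_nonneg (sqrt_nonneg _), rpow_neg hbu.le, ← sqrt_eq_rpow, ← mul_inv,
    ← sqrt_mul hc.le]
  exact inv_anti₀ (sqrt_pos.2 (by positivity)) (sqrt_le_sqrt (hle u hu))

lemma intervalIntegrable_ell_integrand (C : ℝ) :
    IntervalIntegrable (fun u => (√(2 * C - log (u ^ 2 - 1)))⁻¹) volume
      1 (√(1 + exp (2 * C))) := by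
  have hB : √(1 + exp (2 * C)) ^ 2 = 1 + exp (2 * C) := sq_sqrt (by positivity)
  have h1B : 1 ≤ √(1 + exp (2 * C)) := one_le_sqrt.2 (by linarith [exp_pos (2 * C)])
  exact intervalIntegrable_inv_sqrt_of_mul_sub_le h1B (by positivity) (by fun_prop)
    fun u hu => mul_sub_le_sub_log_sq_sub_one hB hu.1 hu.2.le

lemma inv_sqrt_two_mul_le_ell_integrand {C u : ℝ} (hu : 2 ≤ u) (huC : u ≤ exp C) :
    (√(2 * C))⁻¹ ≤ (√(2 * C - log (u ^ 2 - 1)))⁻¹ := by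
  have hlog_pos : 0 < log (u ^ 2 - 1) := log_pos (by nlinarith)
  have hlog_lt : log (u ^ 2 - 1) < 2 * C := by
    rw [← log_exp (2 * C), mul_comm, exp_mul, rpow_two]
    exact log_lt_log (by nlinarith) (by nlinarith)
  exact inv_anti₀ (sqrt_pos.2 (by linarith)) (sqrt_le_sqrt (by linarith))

lemma exp_div_sqrt_le_ell {C : ℝ} (hC : 4 ≤ exp C) : exp C / (2 * √(2 * C)) ≤ ell C := by
  have hB : exp C ≤ √(1 + exp (2 * C)) := by
    rw [le_sqrt (exp_pos C).le (by positivity), ← exp_nat_mul]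
    push_cast
    linarith
  have hint := intervalIntegrable_ell_integrand C
  calc exp C / (2 * √(2 * C)) = ∫ _ in exp C / 2..exp C, (√(2 * C))⁻¹ := by
        rw [intervalIntegral.integral_const, smul_eq_mul]
        ring
    _ ≤ ∫ u in exp C / 2..exp C, (√(2 * C - log (u ^ 2 - 1)))⁻¹ :=
        integral_mono_on (by linarith) intervalIntegrable_const
          (hint.mono_set (Set.uIcc_subset_uIcc (by simp only [Set.mem_uIcc]; left; constructor <;> linarith)
            (by simp only [Set.mem_uIcc]; left; constructor <;> linarith)))
          fun u hu => inv_sqrt_two_mul_le_ell_integrand (by linarith [hu.1]) hu.2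
    _ ≤ ell C := integral_mono_interval (by linarith) (by linarith) hB
        (ae_of_all _ fun u => by positivity) hint

theorem ell_tendsto_atTop :
    Filter.Tendsto ell Filter.atTop Filter.atTop := by
  have hlower : Tendsto (fun C => exp C / (2 * √(2 * C))) atTop atTop := by
    refine ((tendsto_exp_div_rpow_atTop (1 / 2)).atTop_div_const
      (by positivity : (0 : ℝ) < 2 * √2)).congr' ?_
    filter_upwards [eventually_ge_atTop 0] with C hC
    rw [sqrt_mul zero_le_two, sqrt_eq_rpow C]
    ring
  exact tendsto_atTop_mono' atTop
    ((tendsto_exp_atTop.eventually_ge_atTop 4).mono fun C hC => exp_div_sqrt_le_ell hC) hlower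
end

section
/- For every real C, the identity 2C·ℓ_C = ∫_1^{√(1+e^{2C})} [3 + (1+u²)/u² · log(u² − 1)] · √(2C − log(u² − 1)) du holds. -/
/-!
Write `L = log (u² - 1)` and `v = 2C - L`. The function `G u = (u² - 1) L √v / u` has derivative
`(3 + (1 + u²)/u² · L) √v - 2C / √v` on `(1, √(1 + e^{2C}))`, and it vanishes at both
endpoints: at the right one because `v = 0` there, at the left one because
`(u² - 1) |L|^{3/2} → 0`. The identity is therefore the fundamental theorem of calculus for `G`.

The integrands are singular at the endpoints. Each is dominated by the nonnegative derivative of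
a function that is continuous on the closed interval, e.g. `(u² - 1) (L² - 2L + 2)`, whose
derivative is `2u L²`; such derivatives are integrable automatically.
-/

open MeasureTheory intervalIntegral Real

open Set Filter Topology Asymptotics

lemma tendsto_mul_log_sq_nhdsGT_zero :
    Tendsto (fun x : ℝ => x * log x ^ 2) (𝓝[>] 0) (𝓝 0) := by
  have h := (tendsto_log_mul_rpow_nhdsGT_zero (r := 1 / 2) (by norm_num)).pow 2
  rw [zero_pow two_ne_zero] at h
  refine h.congr' (eventually_mem_nhdsWithin.mono fun x (hx : 0 < x) => ?_)
  rw [mul_pow, ← rpow_natCast (x ^ _), ← rpow_mul hx.le]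
  norm_num; ring

lemma continuousOn_mul_comp_log {h : ℝ → ℝ} (hc : Continuous h) (hh : h =O[atBot] (· ^ 2)) :
    ContinuousOn (fun x => x * h (log x)) (Ici 0) := by
  intro x hx
  rcases (mem_Ici.1 hx).eq_or_lt with rfl | hx
  · rw [← continuousWithinAt_Ioi_iff_Ici, ContinuousWithinAt, zero_mul]
    exact ((isBigO_refl _ _).mul (hh.comp_tendsto tendsto_log_nhdsGT_zero)).trans_tendsto
      tendsto_mul_log_sq_nhdsGT_zero
  · exact (continuousAt_id.mul (hc.continuousAt.comp (continuousAt_log hx.ne'))).continuousWithinAt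

lemma isBigO_mul_sqrt_const_sub (c : ℝ) :
    (fun t => t * √(c - t)) =O[atBot] (· ^ 2) := by
  refine IsBigO.of_bound (1 + |c|) ?_
  filter_upwards [eventually_le_atBot (-1)] with t ht
  have hsqrt : √(c - t) ≤ (1 + |c|) * |t| := by
    rw [sqrt_le_left (by positivity)]
    rw [abs_of_neg (by linarith : t < 0)]
    have hk : 1 ≤ (1 + |c|) * -t := by nlinarith [abs_nonneg c]
    nlinarith [le_abs_self c, mul_nonneg (abs_nonneg c) (by linarith : 0 ≤ -t - 1)]
  rw [norm_mul, norm_pow, norm_of_nonneg (sqrt_nonneg _), Real.norm_eq_abs, sq_abs]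
  calc |t| * √(c - t) ≤ |t| * ((1 + |c|) * |t|) :=
        mul_le_mul_of_nonneg_left hsqrt (abs_nonneg t)
    _ = (1 + |c|) * t ^ 2 := by rw [← sq_abs t]; ring

lemma isBigO_sq_sub_two_mul_add_two :
    (fun t : ℝ => t ^ 2 - 2 * t + 2) =O[atBot] (· ^ 2) := by
  refine IsBigO.of_bound 5 ?_
  filter_upwards [eventually_le_atBot (-1)] with t ht
  rw [Real.norm_eq_abs, Real.norm_eq_abs, abs_of_nonneg (by nlinarith),
    abs_of_nonneg (by positivity)]
  nlinarith

lemma hasDerivAt_mul_comp_log_sq_sub_one {h : ℝ → ℝ} {h' u : ℝ} (hu : 0 < u ^ 2 - 1)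
    (hh : HasDerivAt h h' (log (u ^ 2 - 1))) :
    HasDerivAt (fun u => (u ^ 2 - 1) * h (log (u ^ 2 - 1)))
      (2 * u * (h (log (u ^ 2 - 1)) + h')) u := by
  have hx : HasDerivAt (fun u : ℝ => u ^ 2 - 1) (2 * u) u := by
    simpa using (hasDerivAt_pow 2 u).sub_const 1
  refine (hx.mul (hh.comp u (hx.log hu.ne'))).congr_deriv ?_
  simp only [Function.comp_apply]
  field_simp

lemma intervalIntegrable_of_abs_le_deriv {f g g' : ℝ → ℝ} {a b : ℝ} (hab : a ≤ b)
    (hf : AEStronglyMeasurable f) (hcont : ContinuousOn g (Icc a b))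
    (hderiv : ∀ x ∈ Ioo a b, HasDerivAt g (g' x) x) (hle : ∀ x ∈ Ioo a b, |f x| ≤ g' x) :
    IntervalIntegrable f volume a b := by
  rw [intervalIntegrable_iff_integrableOn_Ioo_of_le hab]
  have hg' := integrableOn_deriv_of_nonneg hcont hderiv fun x hx => (abs_nonneg _).trans (hle x hx)
  exact (hg'.mono_set Ioo_subset_Ioc_self).mono' hf.restrict
    (ae_restrict_of_forall_mem measurableSet_Ioo hle)

noncomputable def turningPoint (C : ℝ) : ℝ := √(1 + exp (2 * C))

lemma turningPoint_sq_sub_one (C : ℝ) : turningPoint C ^ 2 - 1 = exp (2 * C) := by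
  rw [turningPoint, sq_sqrt (by positivity)]
  ring

lemma one_lt_turningPoint (C : ℝ) : 1 < turningPoint C := by
  rw [turningPoint, lt_sqrt zero_le_one]
  linarith [exp_pos (2 * C)]

lemma turningPoint_strictMono : StrictMono turningPoint := fun _ _ h =>
  sqrt_lt_sqrt (by positivity) (by gcongr)

lemma sq_sub_one_lt_exp {C u : ℝ} (hu : 0 ≤ u) (hub : u < turningPoint C) :
    u ^ 2 - 1 < exp (2 * C) := by
  rw [← turningPoint_sq_sub_one]
  gcongr

lemma log_sq_sub_one_lt {C u : ℝ} (hu : 1 < u) (hub : u < turningPoint C) :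
    log (u ^ 2 - 1) < 2 * C := by
  simpa using log_lt_log (by nlinarith) (sq_sub_one_lt_exp (by linarith) hub)

noncomputable def ellPrimitive (C u : ℝ) : ℝ :=
  (u ^ 2 - 1) * (log (u ^ 2 - 1) * √(2 * C - log (u ^ 2 - 1))) / u

lemma hasDerivAt_ellPrimitive {C u : ℝ} (hu : 1 < u) (hv : log (u ^ 2 - 1) < 2 * C) :
    HasDerivAt (ellPrimitive C)
      ((3 + (1 + u ^ 2) / u ^ 2 * log (u ^ 2 - 1)) * √(2 * C - log (u ^ 2 - 1)) -
        2 * C * (√(2 * C - log (u ^ 2 - 1)))⁻¹) u := by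
  set L := log (u ^ 2 - 1)
  have hs : 0 < √(2 * C - L) := sqrt_pos.2 (by linarith)
  have hss : √(2 * C - L) ^ 2 = 2 * C - L := sq_sqrt (by linarith)
  have hh : HasDerivAt (fun t => t * √(2 * C - t))
      (1 * √(2 * C - L) + L * (-1 / (2 * √(2 * C - L)))) L :=
    (hasDerivAt_id' L).mul (((hasDerivAt_id' L).const_sub _).sqrt (by linarith))
  refine ((hasDerivAt_mul_comp_log_sq_sub_one (by nlinarith) hh).div (hasDerivAt_id u)
    (by positivity)).congr_deriv ?_
  simp only [id]
  field_simp
  linear_combination (-u ^ 2) * hss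

lemma continuousOn_ellPrimitive (C : ℝ) : ContinuousOn (ellPrimitive C) (Ici 1) := by
  refine ((continuousOn_mul_comp_log (by fun_prop) (isBigO_mul_sqrt_const_sub (2 * C))).comp
    (by fun_prop : Continuous fun u : ℝ => u ^ 2 - 1).continuousOn ?_).div continuousOn_id ?_
  · intro u (hu : 1 ≤ u)
    show 0 ≤ u ^ 2 - 1
    nlinarith
  · intro u (hu : 1 ≤ u)
    positivity

lemma ellPrimitive_one (C : ℝ) : ellPrimitive C 1 = 0 := by
  simp [ellPrimitive]

lemma ellPrimitive_turningPoint (C : ℝ) : ellPrimitive C (turningPoint C) = 0 := by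
  simp [ellPrimitive, turningPoint_sq_sub_one]

lemma abs_three_add_mul_mul_sqrt_le {a c L : ℝ} (ha₀ : 0 ≤ a) (ha : a ≤ 2) :
    |(3 + a * L) * √(c - L)| ≤ (6 + 4 * |c|) * (1 + L ^ 2) := by
  have hsqrt : √(c - L) ≤ 1 + |c| + |L| := by
    rcases le_total (c - L) 0 with h | h
    · rw [sqrt_eq_zero'.2 h]; positivity
    · rw [sqrt_le_left (by positivity)]
      nlinarith [le_abs_self c, neg_abs_le L, abs_nonneg c, abs_nonneg L]
  have hfirst : |3 + a * L| ≤ 3 + 2 * |L| := by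
    calc |3 + a * L| ≤ |3| + |a * L| := abs_add_le _ _
      _ ≤ 3 + 2 * |L| := by
        rw [abs_mul, abs_of_nonneg ha₀]; norm_num; nlinarith [abs_nonneg L]
  rw [abs_mul, abs_of_nonneg (sqrt_nonneg _)]
  calc |3 + a * L| * √(c - L) ≤ (3 + 2 * |L|) * (1 + |c| + |L|) :=
        mul_le_mul hfirst hsqrt (sqrt_nonneg _) (by positivity)
    _ ≤ (6 + 4 * |c|) * (1 + L ^ 2) := by
        nlinarith [sq_abs L, abs_nonneg L, abs_nonneg c, sq_nonneg (|L| - 1),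
          mul_nonneg (abs_nonneg c) (sq_nonneg (|L| - 1))]

lemma intervalIntegrable_three_add_mul_log_mul_sqrt (C : ℝ) {b : ℝ} (hb : 1 ≤ b) :
    IntervalIntegrable (fun u => (3 + (1 + u ^ 2) / u ^ 2 * log (u ^ 2 - 1)) *
      √(2 * C - log (u ^ 2 - 1))) volume 1 b := by
  set K := 6 + 4 * |2 * C|
  have hcont : ContinuousOn
      (fun u : ℝ => (u ^ 2 - 1) * (log (u ^ 2 - 1) ^ 2 - 2 * log (u ^ 2 - 1) + 2)) (Icc 1 b) := by
    refine ((continuousOn_mul_comp_log (by fun_prop) isBigO_sq_sub_two_mul_add_two).comp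
      (by fun_prop : Continuous fun u : ℝ => u ^ 2 - 1).continuousOn ?_)
    intro u hu
    show 0 ≤ u ^ 2 - 1
    nlinarith [hu.1]
  refine intervalIntegrable_of_abs_le_deriv hb (by fun_prop : Measurable _).aestronglyMeasurable
    ((continuousOn_id.add hcont).const_smul K)
    (g' := fun u => K * (1 + 2 * u * log (u ^ 2 - 1) ^ 2))
    (fun u hu => ?_) (fun u hu => ?_)
  · set L := log (u ^ 2 - 1)
    have hh : HasDerivAt (fun t => t ^ 2 - 2 * t + 2) (2 * L - 2) L := by
      simpa using ((hasDerivAt_pow 2 L).sub ((hasDerivAt_id' L).const_mul 2)).add_const 2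
    have hφ := hasDerivAt_mul_comp_log_sq_sub_one (by nlinarith [hu.1]) hh
    refine (((hasDerivAt_id u).add hφ).const_mul K).congr_deriv ?_
    ring
  · have ha : (1 + u ^ 2) / u ^ 2 ≤ 2 := by
      rw [div_le_iff₀ (by nlinarith [hu.1])]; nlinarith [hu.1]
    refine (abs_three_add_mul_mul_sqrt_le (by positivity) ha).trans ?_
    have : 0 ≤ log (u ^ 2 - 1) ^ 2 := sq_nonneg _
    gcongr
    nlinarith [hu.1]

lemma intervalIntegrable_inv_sqrt_two_mul_sub_log (C : ℝ) :
    IntervalIntegrable (fun u => (√(2 * C - log (u ^ 2 - 1)))⁻¹) volume 1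
      (turningPoint C) := by
  -- On `(1, m)` we have `log (u² - 1) < 2C - 1`, so the integrand is at most `1`; on
  -- `(m, turningPoint C)` it is at most `e^{2C}` times the derivative of
  -- `-√(2C - log (u² - 1))`.
  set m := turningPoint (C - 1 / 2)
  have hm : 1 < m := one_lt_turningPoint _
  have hmb : m < turningPoint C := turningPoint_strictMono (by linarith)
  have hmeas : AEStronglyMeasurable fun u => (√(2 * C - log (u ^ 2 - 1)))⁻¹ :=
    (by fun_prop : Measurable _).aestronglyMeasurable
  refine IntervalIntegrable.trans (b := m) ?_ ?_
  · refine intervalIntegrable_of_abs_le_deriv hm.le hmeas continuousOn_id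
      (fun u _ => hasDerivAt_id u) (fun u hu => ?_)
    have hL := log_sq_sub_one_lt hu.1 hu.2
    rw [abs_of_nonneg (by positivity)]
    exact inv_le_one_of_one_le₀ (one_le_sqrt.2 (by linarith))
  · have hsq : ∀ u ∈ Icc m (turningPoint C), 0 < u ^ 2 - 1 := fun u hu => by nlinarith [hu.1]
    refine intervalIntegrable_of_abs_le_deriv hmb.le hmeas
      (g := fun u => -(exp (2 * C) * √(2 * C - log (u ^ 2 - 1))))
      (g' := fun u => exp (2 * C) * (u / ((u ^ 2 - 1) * √(2 * C - log (u ^ 2 - 1)))))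
      (by fun_prop (disch := exact fun u hu => (hsq u hu).ne')) (fun u hu => ?_) (fun u hu => ?_)
    · have hx := hsq u (Ioo_subset_Icc_self hu)
      have hv : 0 < 2 * C - log (u ^ 2 - 1) := by
        linarith [log_sq_sub_one_lt (hm.trans hu.1) hu.2]
      have hL : HasDerivAt (fun u : ℝ => log (u ^ 2 - 1)) (2 * u / (u ^ 2 - 1)) u := by
        simpa using ((hasDerivAt_pow 2 u).sub_const 1).log hx.ne'
      refine ((hL.const_sub (2 * C)).sqrt hv.ne' |>.const_mul (exp (2 * C)) |>.neg).congr_deriv ?_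
      field_simp
    · have hx := hsq u (Ioo_subset_Icc_self hu)
      have hs : 0 < √(2 * C - log (u ^ 2 - 1)) :=
        sqrt_pos.2 (by linarith [log_sq_sub_one_lt (hm.trans hu.1) hu.2])
      have hxe := sq_sub_one_lt_exp (by linarith [hu.1]) hu.2
      rw [abs_of_pos (inv_pos.2 hs), mul_div_assoc', div_mul_eq_div_div, div_eq_mul_inv _ (√_)]
      refine le_mul_of_one_le_left (inv_pos.2 hs).le ?_
      rw [one_le_div hx]
      nlinarith [hu.1]

theorem two_C_ell_identity (C : ℝ) :
    2 * C * ell C =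
      ∫ u in (1 : ℝ)..Real.sqrt (1 + Real.exp (2 * C)),
        (3 + (1 + u ^ 2) / u ^ 2 * Real.log (u ^ 2 - 1)) *
          Real.sqrt (2 * C - Real.log (u ^ 2 - 1)) := by
  have hb := one_lt_turningPoint C
  have hf := intervalIntegrable_three_add_mul_log_mul_sqrt C hb.le
  have hinv := (intervalIntegrable_inv_sqrt_two_mul_sub_log C).const_mul (2 * C)
  have hftc := integral_eq_sub_of_hasDerivAt_of_le hb.le
    ((continuousOn_ellPrimitive C).mono Icc_subset_Ici_self)
    (fun u hu => hasDerivAt_ellPrimitive hu.1 (log_sq_sub_one_lt hu.1 hu.2)) (hf.sub hinv)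
  rw [integral_sub hf hinv, intervalIntegral.integral_const_mul, ellPrimitive_turningPoint,
    ellPrimitive_one, sub_zero, sub_eq_zero] at hftc
  exact hftc.symm
end

section
/- Define F(C) := 2 ∫_1^{√(1+e^{2C})} √(2C − log(u² − 1)) du. Then F is differentiable on ℝ and F'(C) = 2ℓ_C, where ℓ_C = ∫_1^{√(1+e^{2C})} du/√(2C − log(u² − 1)). -/
open MeasureTheory intervalIntegral Real

/-- Head contribution to the energy of the solitary wave. -/
noncomputable def F (C : ℝ) : ℝ :=
  2 * ∫ u in (1 : ℝ)..Real.sqrt (1 + Real.exp (2 * C)),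
    Real.sqrt (2 * C - Real.log (u ^ 2 - 1))

/-!
The substitution `u = φ_C(s) := √(1 + e^{2C - s²})`, inverse to `s = √(2C - log(u² - 1))`, maps
`(0, ∞)` onto `(1, √(1 + e^{2C}))` and moves the `C`-dependence from the endpoint into a smooth
integrand over a fixed domain:
`ℓ_C = ∫₀^∞ e^{2C - s²} / φ_C(s) ds` and `F(C) = 2 ∫₀^∞ s² e^{2C - s²} / φ_C(s) ds`.
Since `∂ₛ φ_C(s) = -s e^{2C - s²} / φ_C(s)`, integrating by parts turns the latter into
`F(C) = 2 ∫₀^∞ (φ_C(s) - 1) ds`, and `∂_C φ_C(s) = e^{2C - s²} / φ_C(s)` is dominated by a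
Gaussian locally uniformly in `C`, so differentiating under the integral sign gives `F' = 2ℓ`.
-/

namespace HeadEnergy

open Set Filter Topology

lemma integrableOn_pow_mul_exp_sub_sq (c : ℝ) (n : ℕ) :
    IntegrableOn (fun s => s ^ n * exp (c - s ^ 2)) (Ioi 0) := by
  refine IntegrableOn.congr_fun ((integrableOn_rpow_mul_exp_neg_mul_sq one_pos (s := n)
    (by linarith [n.cast_nonneg (α := ℝ)])).const_mul (exp c)) (fun s _ => ?_) measurableSet_Ioi
  rw [rpow_natCast, sub_eq_add_neg, exp_add]
  ring_nf

lemma integrable_exp_sub_sq (c : ℝ) : Integrable fun s => exp (c - s ^ 2) := by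
  refine ((integrable_exp_neg_mul_sq one_pos).const_mul (exp c)).congr
    (Eventually.of_forall fun s => ?_)
  simp only [sub_eq_add_neg, exp_add, neg_mul, one_mul]

lemma tendsto_mul_exp_sub_sq_atTop (c : ℝ) :
    Tendsto (fun s => s * exp (c - s ^ 2)) atTop (𝓝 0) := by
  have h := ((tendsto_rpow_abs_mul_exp_neg_mul_sq_cocompact one_pos 1).mono_left
    atTop_le_cocompact).const_mul (exp c)
  rw [mul_zero] at h
  refine h.congr' ((eventually_ge_atTop 0).mono fun s hs => ?_)
  dsimp only
  rw [rpow_one, abs_of_nonneg hs, sub_eq_add_neg, exp_add]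
  ring_nf

lemma _root_.HasDerivAt.sqrt_one_add_exp {g : ℝ → ℝ} {g' x : ℝ} (hg : HasDerivAt g g' x) :
    HasDerivAt (fun y => √(1 + exp (g y))) (exp (g x) * g' / (2 * √(1 + exp (g x)))) x :=
  (hg.exp.const_add 1).sqrt (by positivity)

/-- The inverse of `u ↦ √(2C - log(u² - 1))` on `(1, √(1 + e^{2C}))`. -/
noncomputable def profileInv (C s : ℝ) : ℝ := √(1 + exp (2 * C - s ^ 2))

variable (C : ℝ)

lemma profileInv_zero : profileInv C 0 = √(1 + exp (2 * C)) := by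
  simp [profileInv]

lemma one_lt_profileInv (s : ℝ) : 1 < profileInv C s :=
  lt_sqrt_of_sq_lt (by simpa using exp_pos (2 * C - s ^ 2))

lemma profileInv_pos (s : ℝ) : 0 < profileInv C s := one_pos.trans (one_lt_profileInv C s)

lemma profileInv_sq (s : ℝ) : profileInv C s ^ 2 = 1 + exp (2 * C - s ^ 2) :=
  sq_sqrt (by positivity)

lemma profileInv_sub_one_le (s : ℝ) : profileInv C s - 1 ≤ exp (2 * C - s ^ 2) := by
  nlinarith [profileInv_sq C s, one_lt_profileInv C s]

lemma sqrt_two_mul_sub_log_profileInv {s : ℝ} (hs : 0 ≤ s) :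
    √(2 * C - log (profileInv C s ^ 2 - 1)) = s := by
  rw [profileInv_sq, add_sub_cancel_left, log_exp, sub_sub_cancel, sqrt_sq hs]

lemma hasDerivAt_profileInv (s : ℝ) :
    HasDerivAt (profileInv C) (-(s * exp (2 * C - s ^ 2) / profileInv C s)) s := by
  refine ((hasDerivAt_pow 2 s).const_sub (2 * C)).sqrt_one_add_exp.congr_deriv ?_
  rw [profileInv]
  field_simp
  ring

lemma hasDerivAt_profileInv_left (s : ℝ) :
    HasDerivAt (profileInv · s) (exp (2 * C - s ^ 2) / profileInv C s) C := by
  refine (((hasDerivAt_id' C).const_mul 2).sub_const (s ^ 2)).sqrt_one_add_exp.congr_deriv ?_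
  rw [profileInv]
  field_simp

@[fun_prop]
lemma continuous_profileInv : Continuous (profileInv C) :=
  continuous_iff_continuousAt.2 fun s => (hasDerivAt_profileInv C s).continuousAt

lemma strictAntiOn_profileInv : StrictAntiOn (profileInv C) (Ici 0) := by
  intro a ha b hb hab
  have : exp (2 * C - b ^ 2) < exp (2 * C - a ^ 2) := by gcongr
  exact sqrt_lt_sqrt (by positivity) (by linarith)

lemma image_profileInv_Ioi : profileInv C '' Ioi 0 = Ioo 1 (√(1 + exp (2 * C))) := by
  ext u
  constructor
  · rintro ⟨s, hs, rfl⟩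
    exact ⟨one_lt_profileInv C s, profileInv_zero C ▸
      strictAntiOn_profileInv C self_mem_Ici (mem_Ici.2 (le_of_lt hs)) hs⟩
  · rintro ⟨h1, h2⟩
    have hu : u ^ 2 < 1 + exp (2 * C) := by
      simpa using (lt_sqrt (by linarith)).1 h2
    have hlog : log (u ^ 2 - 1) < 2 * C := by
      rw [log_lt_iff_lt_exp (by nlinarith)]
      linarith
    refine ⟨√(2 * C - log (u ^ 2 - 1)), sqrt_pos.2 (by linarith), ?_⟩
    rw [profileInv, sq_sqrt (by linarith), sub_sub_cancel, exp_log (by nlinarith),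
      add_sub_cancel, sqrt_sq (by linarith)]

lemma integral_eq_integral_Ioi_profileInv (f : ℝ → ℝ) :
    ∫ u in (1 : ℝ)..√(1 + exp (2 * C)), f u =
      ∫ s in Ioi 0, s * exp (2 * C - s ^ 2) / profileInv C s * f (profileInv C s) := by
  rw [intervalIntegral.integral_of_le (profileInv_zero C ▸ one_lt_profileInv C 0).le,
    integral_Ioc_eq_integral_Ioo, ← image_profileInv_Ioi,
    integral_image_eq_integral_abs_deriv_smul measurableSet_Ioi
      (fun s _ => (hasDerivAt_profileInv C s).hasDerivWithinAt)
      ((strictAntiOn_profileInv C).injOn.mono Ioi_subset_Ici_self)]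
  refine setIntegral_congr_fun measurableSet_Ioi fun s (hs : 0 < s) => ?_
  have := profileInv_pos C s
  rw [smul_eq_mul, abs_neg, abs_of_nonneg (by positivity)]

lemma ell_eq_integral_Ioi : ell C = ∫ s in Ioi 0, exp (2 * C - s ^ 2) / profileInv C s := by
  rw [ell, integral_eq_integral_Ioi_profileInv]
  refine setIntegral_congr_fun measurableSet_Ioi fun s (hs : 0 < s) => ?_
  rw [sqrt_two_mul_sub_log_profileInv C hs.le]
  field_simp

lemma F_eq_integral_Ioi :
    F C = 2 * ∫ s in Ioi 0, s ^ 2 * exp (2 * C - s ^ 2) / profileInv C s := by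
  rw [F, integral_eq_integral_Ioi_profileInv]
  congr 1
  refine setIntegral_congr_fun measurableSet_Ioi fun s (hs : 0 < s) => ?_
  rw [sqrt_two_mul_sub_log_profileInv C hs.le]
  ring

lemma integrableOn_profileInv_sub_one : IntegrableOn (fun s => profileInv C s - 1) (Ioi 0) := by
  refine Integrable.mono' (integrable_exp_sub_sq (2 * C)).integrableOn
    (Continuous.aestronglyMeasurable (by fun_prop)) (Eventually.of_forall fun s => ?_)
  rw [norm_of_nonneg (sub_nonneg.2 (one_lt_profileInv C s).le)]
  exact profileInv_sub_one_le C s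

lemma integrableOn_sq_mul_exp_div_profileInv :
    IntegrableOn (fun s => s ^ 2 * exp (2 * C - s ^ 2) / profileInv C s) (Ioi 0) := by
  refine (integrableOn_pow_mul_exp_sub_sq (2 * C) 2).mono'
    ((Continuous.div (by fun_prop) (by fun_prop) (profileInv_pos C · |>.ne')).aestronglyMeasurable)
    (Eventually.of_forall fun s => ?_)
  rw [norm_of_nonneg (by have := profileInv_pos C s; positivity)]
  exact div_le_self (by positivity) (one_lt_profileInv C s).le

lemma tendsto_mul_profileInv_sub_one_atTop :
    Tendsto (fun s => s * (profileInv C s - 1)) atTop (𝓝 0) := by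
  refine squeeze_zero' ((eventually_ge_atTop 0).mono fun s hs => ?_)
    ((eventually_ge_atTop 0).mono fun s hs => ?_) (tendsto_mul_exp_sub_sq_atTop (2 * C))
  · exact mul_nonneg hs (sub_nonneg.2 (one_lt_profileInv C s).le)
  · exact mul_le_mul_of_nonneg_left (profileInv_sub_one_le C s) hs

lemma integral_sq_mul_exp_div_profileInv :
    ∫ s in Ioi 0, s ^ 2 * exp (2 * C - s ^ 2) / profileInv C s =
      ∫ s in Ioi 0, (profileInv C s - 1) := by
  have hparts := integral_Ioi_mul_deriv_eq_deriv_mul (a := 0) (a' := 0) (b' := 0)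
    (fun s _ => hasDerivAt_id' s) (fun s _ => (hasDerivAt_profileInv C s).sub_const 1)
    ((integrableOn_sq_mul_exp_div_profileInv C).neg.congr_fun
      (fun s _ => by simp only [Pi.mul_apply, Pi.neg_apply]; ring) measurableSet_Ioi)
    (by simpa only [Pi.mul_def, one_mul] using integrableOn_profileInv_sub_one C)
    (((by fun_prop : Continuous fun s => s * (profileInv C s - 1)).tendsto' 0 0
      (zero_mul _)).mono_left nhdsWithin_le_nhds)
    (tendsto_mul_profileInv_sub_one_atTop C)
  simp only [mul_neg, one_mul, zero_sub, sub_zero, MeasureTheory.integral_neg, neg_inj] at hparts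
  rw [← hparts]
  congr 1 with s
  ring

lemma hasDerivAt_integral_profileInv_sub_one :
    HasDerivAt (fun C => ∫ s in Ioi 0, (profileInv C s - 1))
      (∫ s in Ioi 0, exp (2 * C - s ^ 2) / profileInv C s) C := by
  refine (_root_.hasDerivAt_integral_of_dominated_loc_of_deriv_le (μ := volume.restrict (Ioi 0))
    (F := fun C s => profileInv C s - 1) (F' := fun C s => exp (2 * C - s ^ 2) / profileInv C s)
    (Metric.ball_mem_nhds C one_pos)
    (Eventually.of_forall fun C' => Continuous.aestronglyMeasurable (by fun_prop))
    (integrableOn_profileInv_sub_one C)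
    ((Continuous.div (by fun_prop) (by fun_prop) (profileInv_pos C · |>.ne')).aestronglyMeasurable)
    (Eventually.of_forall fun s C' hC' => ?_)
    (integrable_exp_sub_sq (2 * (C + 1))).integrableOn
    (Eventually.of_forall fun s C' _ => (hasDerivAt_profileInv_left C' s).sub_const 1)).2
  have hC'lt : C' < C + 1 := by
    linarith [(abs_lt.1 (Metric.mem_ball.1 hC')).2]
  rw [norm_of_nonneg (by have := profileInv_pos C' s; positivity)]
  calc exp (2 * C' - s ^ 2) / profileInv C' s ≤ exp (2 * C' - s ^ 2) :=
        div_le_self (exp_pos _).le (one_lt_profileInv C' s).le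
    _ ≤ exp (2 * (C + 1) - s ^ 2) := by gcongr

end HeadEnergy

open HeadEnergy Set in
theorem F_hasDerivAt (C : ℝ) : HasDerivAt F (2 * ell C) C := by
  have hF : F = fun C => 2 * ∫ s in Ioi 0, (profileInv C s - 1) := by
    funext C
    rw [F_eq_integral_Ioi, integral_sq_mul_exp_div_profileInv]
  rw [hF, ell_eq_integral_Ioi]
  exact (hasDerivAt_integral_profileInv_sub_one C).const_mul 2
end

section
/- There exists C₀ < 0 such that G'(C) = −2ℓ_C − 4C·(dℓ_C/dC) > 0 for all C < C₀. -/
open MeasureTheory intervalIntegral Real Set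

theorem G_deriv_pos_near_minus_infty :
    ∃ C₀ : ℝ, C₀ < 0 ∧ ∀ C : ℝ, C < C₀ →
      0 < -2 * ell C - 4 * C * ellDeriv C := by
  refine ⟨-1, by norm_num, fun C hC => ?_⟩
  set b := Real.sqrt (1 + Real.exp (2 * C)) with hbdef
  have hb2 : b ^ 2 = 1 + Real.exp (2 * C) := Real.sq_sqrt (by positivity)
  have hb1 : 1 < b := by
    nlinarith [Real.exp_pos (2*C), Real.sqrt_nonneg (1 + Real.exp (2 * C))]
  have hbe : b ^ 2 - 1 = Real.exp (2 * C) := by linarith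
  have hlogb : Real.log (b ^ 2 - 1) = 2 * C := by rw [hbe, Real.log_exp]
  set s : ℝ → ℝ := fun u => Real.sqrt (2 * C - Real.log (u ^ 2 - 1)) with hs
  set f : ℝ → ℝ := fun u => (s u)⁻¹ with hf
  set g : ℝ → ℝ := fun u => (1 + u ^ 2) / (u ^ 2 * s u) with hg
  have hb1' : (0:ℝ) < b ^ 2 - 1 := by nlinarith
  have hgsplit : ∀ u : ℝ, g u = ((1 + u ^ 2) / u ^ 2) * (s u)⁻¹ := by
    intro u
    simp only [hg]
    rw [div_mul_eq_div_div, div_eq_mul_inv]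
  have hg0 : ∀ u : ℝ, 0 ≤ g u := by
    intro u
    apply div_nonneg (by positivity)
    exact mul_nonneg (by positivity) (Real.sqrt_nonneg _)
  have hf0 : ∀ u : ℝ, 0 ≤ f u := fun u => inv_nonneg.mpr (Real.sqrt_nonneg _)
  -- pointwise f ≤ g for u ≥ 1
  have hfg : ∀ u : ℝ, 1 ≤ u → f u ≤ g u := by
    intro u hu
    have hu2 : (0:ℝ) < u ^ 2 := by nlinarith
    have h2 : (1:ℝ) ≤ (1 + u ^ 2) / u ^ 2 := by
      rw [le_div_iff₀ hu2]; linarith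
    have h3 : (0:ℝ) ≤ (s u)⁻¹ := inv_nonneg.mpr (Real.sqrt_nonneg _)
    calc f u = 1 * (s u)⁻¹ := by simp [hf]
      _ ≤ ((1 + u ^ 2) / u ^ 2) * (s u)⁻¹ := by gcongr
      _ = g u := (hgsplit u).symm
  -- lower bound on s for u in Ioc 1 b
  have hslb : ∀ u ∈ Ioc (1:ℝ) b, Real.sqrt ((b ^ 2 - u ^ 2) / (b ^ 2 - 1)) ≤ s u := by
    intro u hu
    have hu1 : (0:ℝ) < u ^ 2 - 1 := by nlinarith [hu.1]
    apply Real.sqrt_le_sqrt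
    have hlog : Real.log ((u ^ 2 - 1) / (b ^ 2 - 1)) ≤ (u ^ 2 - 1) / (b ^ 2 - 1) - 1 :=
      Real.log_le_sub_one_of_pos (by positivity)
    rw [Real.log_div hu1.ne' hb1'.ne', hlogb] at hlog
    have hcanc : (u ^ 2 - 1) / (b ^ 2 - 1) * (b ^ 2 - 1) = u ^ 2 - 1 :=
      div_mul_cancel₀ _ hb1'.ne'
    rw [div_le_iff₀ hb1']
    nlinarith [hlog, hcanc, mul_le_mul_of_nonneg_right hlog hb1'.le]
  -- the upper bound: g u ≤ K * (b-u)^(-1/2) on Ioc 1 b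
  set K : ℝ := 2 * Real.sqrt (b ^ 2 - 1) with hK
  have hgub : ∀ u ∈ Ioc (1:ℝ) b, g u ≤ K * (b - u) ^ (-(1/2) : ℝ) := by
    intro u hu
    have hrpow : (b - u) ^ (-(1/2) : ℝ) = (Real.sqrt (b - u))⁻¹ := by
      rw [Real.rpow_neg (by linarith [hu.2]), Real.sqrt_eq_rpow]
    rw [hrpow]
    rcases eq_or_lt_of_le hu.2 with heq | hub
    · have hsb : s u = 0 := by
        simp only [hs]
        rw [heq, ← hlogb]
        simp
      rw [heq] at hsb
      rw [heq]
      simp [hg, hsb]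
    · have hu1 : (0:ℝ) < u ^ 2 - 1 := by nlinarith [hu.1]
      have hbu2 : (0:ℝ) < b ^ 2 - u ^ 2 := by nlinarith [hu.1]
      have hbu : (0:ℝ) < b - u := by linarith
      have hq : (0:ℝ) < (b ^ 2 - u ^ 2) / (b ^ 2 - 1) := by positivity
      have hs0 : 0 < s u := lt_of_lt_of_le (Real.sqrt_pos.mpr hq) (hslb u hu)
      have hc2 : (1 + u ^ 2) / u ^ 2 ≤ 2 := by
        rw [div_le_iff₀ (by nlinarith [hu.1] : (0:ℝ) < u ^ 2)]; nlinarith [hu.1]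
      have h1 : g u ≤ 2 * (s u)⁻¹ := by
        rw [hgsplit u]
        gcongr
      have h2 : (s u)⁻¹ ≤ (Real.sqrt ((b ^ 2 - u ^ 2) / (b ^ 2 - 1)))⁻¹ :=
        inv_anti₀ (Real.sqrt_pos.mpr hq) (hslb u hu)
      have h3 : (Real.sqrt ((b ^ 2 - u ^ 2) / (b ^ 2 - 1)))⁻¹
          = Real.sqrt (b ^ 2 - 1) * (Real.sqrt (b ^ 2 - u ^ 2))⁻¹ := by
        rw [Real.sqrt_div hbu2.le, inv_div, div_eq_mul_inv]
      have h4 : (Real.sqrt (b ^ 2 - u ^ 2))⁻¹ ≤ (Real.sqrt (b - u))⁻¹ := by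
        apply inv_anti₀ (Real.sqrt_pos.mpr hbu)
        apply Real.sqrt_le_sqrt
        nlinarith [hu.1]
      calc g u ≤ 2 * (s u)⁻¹ := h1
        _ ≤ 2 * (Real.sqrt ((b ^ 2 - u ^ 2) / (b ^ 2 - 1)))⁻¹ := by gcongr
        _ = 2 * (Real.sqrt (b ^ 2 - 1) * (Real.sqrt (b ^ 2 - u ^ 2))⁻¹) := by rw [h3]
        _ ≤ 2 * (Real.sqrt (b ^ 2 - 1) * (Real.sqrt (b - u))⁻¹) := by
            gcongr
        _ = K * (Real.sqrt (b - u))⁻¹ := by rw [hK]; ring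
  -- integrability of the dominating function
  have hint_h : IntervalIntegrable (fun u => K * (b - u) ^ (-(1/2) : ℝ)) volume 1 b := by
    have h0 : IntervalIntegrable (fun x : ℝ => x ^ (-(1/2) : ℝ)) volume 0 (b - 1) :=
      intervalIntegral.intervalIntegrable_rpow' (by norm_num)
    have h1 : IntervalIntegrable (fun x : ℝ => (b - x) ^ (-(1/2) : ℝ)) volume b 1 := by
      simpa using h0.comp_sub_left b
    exact h1.symm.const_mul K
  -- measurability
  have hmeasg : Measurable g := by
    exact ((measurable_const.add (measurable_id.pow_const 2)).div
      (((measurable_id.pow_const 2)).mul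
        ((measurable_const.sub
          (Real.measurable_log.comp ((measurable_id.pow_const 2).sub measurable_const))).sqrt)))
  have hmeasf : Measurable f :=
    ((measurable_const.sub
      (Real.measurable_log.comp ((measurable_id.pow_const 2).sub measurable_const))).sqrt).inv
  -- integrability of g
  have hgint : IntervalIntegrable g volume 1 b := by
    apply hint_h.mono_fun' hmeasg.aestronglyMeasurable
    rw [Set.uIoc_of_le hb1.le]
    filter_upwards [ae_restrict_mem measurableSet_Ioc] with u hu
    rw [Real.norm_eq_abs, abs_of_nonneg (hg0 u)]
    exact hgub u hu
  -- integrability of f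
  have hfint : IntervalIntegrable f volume 1 b := by
    apply hgint.mono_fun' hmeasf.aestronglyMeasurable
    rw [Set.uIoc_of_le hb1.le]
    filter_upwards [ae_restrict_mem measurableSet_Ioc] with u hu
    rw [Real.norm_eq_abs, abs_of_nonneg (hf0 u)]
    exact hfg u hu.1.le
  -- positivity of ∫ g
  have hpos : 0 < ∫ u in (1:ℝ)..b, g u := by
    apply intervalIntegral_pos_of_pos_on hgint _ hb1
    intro x hx
    have hx1 : (0:ℝ) < x ^ 2 - 1 := by nlinarith [hx.1]
    have hbx2 : (0:ℝ) < b ^ 2 - x ^ 2 := by nlinarith [hx.1, hx.2]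
    have hq : (0:ℝ) < (b ^ 2 - x ^ 2) / (b ^ 2 - 1) := by positivity
    have hs0 : 0 < s x :=
      lt_of_lt_of_le (Real.sqrt_pos.mpr hq) (hslb x ⟨hx.1, hx.2.le⟩)
    apply div_pos (by positivity)
    exact mul_pos (by nlinarith [hx.1]) hs0
  -- ∫ f ≤ ∫ g
  have hmono : (∫ u in (1:ℝ)..b, f u) ≤ ∫ u in (1:ℝ)..b, g u :=
    intervalIntegral.integral_mono_on hb1.le hfint hgint (fun x hx => hfg x hx.1)
  have hellf : ell C = ∫ u in (1:ℝ)..b, f u := rfl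
  have hellg : ellDeriv C = ∫ u in (1:ℝ)..b, g u := rfl
  rw [hellf, hellg]
  nlinarith [mul_pos (show (0:ℝ) < -4 * C - 2 by linarith) hpos, hmono, hpos]
end

section
/- The function x ↦ ∫_u^1 dξ/√(−log(1 − ξ²)), viewed as defining u = u_cusp(x) implicitly via |x| = ∫_{u}^1 dξ/√(−log(1−ξ²)) for u ∈ (0,1), is well-defined: the integral ∫_u^1 dξ/√(−log(1 − ξ²)) is finite for every u ∈ (0,1), and the map u ↦ ∫_u^1 dξ/√(−log(1−ξ²)) is a strictly decreasing continuous bijection from (0,1) onto (0, ∞). -/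
open MeasureTheory intervalIntegral Real Set

/-- The implicit function defining the cusped soliton:
`Φ u = ∫_u^1 dξ/√(−log(1−ξ²))`. -/
noncomputable def Phi (u : ℝ) : ℝ :=
  ∫ ξ in u..(1 : ℝ), (Real.sqrt (-Real.log (1 - ξ ^ 2)))⁻¹

/-!
Write `φ ξ = (√(-log (1 - ξ²)))⁻¹`. It is positive and continuous on `(0, 1)` and decreasing on
`(0, 1]`, hence integrable on every `[u, 1]`. By the fundamental theorem of calculus `Φ' = -φ < 0`,
so `Φ` is continuous and strictly decreasing on `(0, 1)`, and it extends continuously to `Φ 1 = 0`.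
Since `-log (1 - t) ≤ t / (1 - t) ≤ 2t` for `t ≤ 1/2`, we get `φ ξ ≥ 1 / (√2 ξ)` near `0`, so
`Φ u ≥ log (1 / (2u)) / √2 → ∞` as `u → 0⁺`; the intermediate value theorem then shows that `Φ`
maps `(0, 1)` onto `(0, ∞)`.
-/

open Filter Topology

section IntegralFromLeftEndpoint

variable {f : ℝ → ℝ} {a b : ℝ}

theorem hasDerivAt_integral_left_of_continuousOn (hcont : ContinuousOn f (Ioo a b))
    (hint : ∀ u ∈ Ioo a b, IntervalIntegrable f volume u b) {u : ℝ} (hu : u ∈ Ioo a b) :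
    HasDerivAt (fun v => ∫ x in v..b, f x) (-f u) u :=
  integral_hasDerivAt_left (hint u hu) (hcont.stronglyMeasurableAtFilter isOpen_Ioo u hu)
    (hcont.continuousAt (isOpen_Ioo.mem_nhds hu))

theorem continuousOn_integral_left (hcont : ContinuousOn f (Ioo a b))
    (hint : ∀ u ∈ Ioo a b, IntervalIntegrable f volume u b) :
    ContinuousOn (fun v => ∫ x in v..b, f x) (Ioo a b) := fun _u hu =>
  (hasDerivAt_integral_left_of_continuousOn hcont hint hu).continuousAt.continuousWithinAt

theorem strictAntiOn_integral_left (hcont : ContinuousOn f (Ioo a b))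
    (hpos : ∀ x ∈ Ioo a b, 0 < f x) (hint : ∀ u ∈ Ioo a b, IntervalIntegrable f volume u b) :
    StrictAntiOn (fun v => ∫ x in v..b, f x) (Ioo a b) := by
  refine strictAntiOn_of_hasDerivWithinAt_neg (convex_Ioo a b)
    (continuousOn_integral_left hcont hint) (f' := fun u => -f u) (fun u hu => ?_)
    (fun u hu => neg_neg_of_pos (hpos u (interior_subset hu)))
  rw [interior_Ioo] at hu ⊢
  exact (hasDerivAt_integral_left_of_continuousOn hcont hint hu).hasDerivWithinAt

theorem bijOn_integral_left_Ioi (hcont : ContinuousOn f (Ioo a b))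
    (hpos : ∀ x ∈ Ioo a b, 0 < f x) (hint : ∀ u ∈ Ioo a b, IntervalIntegrable f volume u b)
    (hab : a < b) (htop : Tendsto (fun v => ∫ x in v..b, f x) (𝓝[>] a) atTop) :
    BijOn (fun v => ∫ x in v..b, f x) (Ioo a b) (Ioi 0) := by
  refine ⟨fun u hu => intervalIntegral_pos_of_pos_on (hint u hu)
      (fun x hx => hpos x ⟨hu.1.trans hx.1, hx.2⟩) hu.2,
    (strictAntiOn_integral_left hcont hpos hint).injOn, fun y (hy : 0 < y) => ?_⟩
  obtain ⟨c, hyc, hc⟩ : ∃ c, y < ∫ x in c..b, f x ∧ c ∈ Ioo a b :=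
    ((htop.eventually_gt_atTop y).and (Ioo_mem_nhdsGT hab)).exists
  have hcb : ContinuousOn (fun v => ∫ x in v..b, f x) (Icc c b) := by
    rw [← uIcc_of_le hc.2.le]
    exact continuousOn_primitive_interval_left ((intervalIntegrable_iff').1 (hint c hc))
  obtain ⟨u, hu, rfl⟩ := intermediate_value_Ioo' hc.2.le hcb ⟨by simpa using hy, hyc⟩
  exact ⟨u, ⟨hc.1.trans hu.1, hu.2⟩, rfl⟩

end IntegralFromLeftEndpoint

noncomputable def phiIntegrand (ξ : ℝ) : ℝ := (√(-log (1 - ξ ^ 2)))⁻¹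

theorem neg_log_one_sub_sq_pos {ξ : ℝ} (hξ : ξ ∈ Ioo (0 : ℝ) 1) : 0 < -log (1 - ξ ^ 2) := by
  have hξ2 : ξ ^ 2 < 1 := by nlinarith [hξ.1, hξ.2]
  have := log_neg (by linarith) (by nlinarith [hξ.1] : 1 - ξ ^ 2 < 1)
  linarith

theorem phiIntegrand_pos {ξ : ℝ} (hξ : ξ ∈ Ioo (0 : ℝ) 1) : 0 < phiIntegrand ξ :=
  inv_pos.2 (sqrt_pos.2 (neg_log_one_sub_sq_pos hξ))

theorem continuousOn_phiIntegrand : ContinuousOn phiIntegrand (Ioo 0 1) := by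
  intro ξ hξ
  have h : 1 - ξ ^ 2 ≠ 0 := by nlinarith [hξ.1, hξ.2]
  have hpoly : ContinuousAt (fun x : ℝ => 1 - x ^ 2) ξ := by fun_prop
  exact ((hpoly.log h).neg.sqrt.inv₀
    (sqrt_pos.2 (neg_log_one_sub_sq_pos hξ)).ne').continuousWithinAt

theorem antitoneOn_phiIntegrand : AntitoneOn phiIntegrand (Ioc 0 1) := by
  intro x hx y hy hxy
  rcases hy.2.eq_or_lt with rfl | hy1
  -- `phiIntegrand 1 = 0` through the conventions `log 0 = 0` and `0⁻¹ = 0`.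
  · simp only [phiIntegrand, one_pow, sub_self, log_zero, neg_zero, sqrt_zero, inv_zero]
    exact inv_nonneg.2 (sqrt_nonneg _)
  have hlog : log (1 - y ^ 2) ≤ log (1 - x ^ 2) :=
    log_le_log (by nlinarith [hx.1, hy.1]) (by nlinarith [hx.1])
  exact inv_anti₀ (sqrt_pos.2 (neg_log_one_sub_sq_pos ⟨hx.1, hxy.trans_lt hy1⟩))
    (sqrt_le_sqrt (neg_le_neg hlog))

theorem intervalIntegrable_phiIntegrand {u : ℝ} (hu : u ∈ Ioc (0 : ℝ) 1) :
    IntervalIntegrable phiIntegrand volume u 1 :=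
  (antitoneOn_phiIntegrand.mono (by rw [uIcc_of_le hu.2]; exact Icc_subset_Ioc hu.1 le_rfl))
    |>.intervalIntegrable

theorem neg_log_one_sub_le {t : ℝ} (ht : t < 1) : -log (1 - t) ≤ t / (1 - t) := by
  have := one_sub_inv_le_log_of_pos (sub_pos.2 ht)
  have h : 1 - (1 - t)⁻¹ = -(t / (1 - t)) := by field_simp [(sub_pos.2 ht).ne']; ring
  linarith

theorem inv_sqrt_two_mul_le_phiIntegrand {ξ : ℝ} (hξ : 0 < ξ) (hξ2 : ξ ^ 2 ≤ 1 / 2) :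
    (√2 * ξ)⁻¹ ≤ phiIntegrand ξ := by
  have hlog : -log (1 - ξ ^ 2) ≤ 2 * ξ ^ 2 := by
    refine (neg_log_one_sub_le (by linarith)).trans ?_
    rw [div_le_iff₀ (by linarith)]
    nlinarith
  have hsqrt : √(-log (1 - ξ ^ 2)) ≤ √2 * ξ := by
    rw [show √2 * ξ = √(2 * ξ ^ 2) by rw [sqrt_mul zero_le_two, sqrt_sq hξ.le]]
    exact sqrt_le_sqrt hlog
  exact inv_anti₀ (sqrt_pos.2 (neg_log_one_sub_sq_pos ⟨hξ, by nlinarith⟩)) hsqrt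

theorem inv_sqrt_two_mul_log_le_Phi {u : ℝ} (hu0 : 0 < u) (hu : u ≤ 1 / 2) :
    (√2)⁻¹ * log ((1 / 2) / u) ≤ Phi u := by
  have hint := intervalIntegrable_phiIntegrand ⟨hu0, by linarith⟩
  calc (√2)⁻¹ * log ((1 / 2) / u) = ∫ ξ in u..1 / 2, (√2 * ξ)⁻¹ := by
        simp only [mul_inv, intervalIntegral.integral_const_mul,
          integral_inv_of_pos hu0 one_half_pos]
    _ ≤ ∫ ξ in u..1 / 2, phiIntegrand ξ := by
        refine integral_mono_on hu (intervalIntegrable_inv (fun ξ hξ => ?_) (by fun_prop))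
          (hint.mono_set ?_) fun ξ hξ =>
            inv_sqrt_two_mul_le_phiIntegrand (hu0.trans_le hξ.1) (by nlinarith [hξ.1, hξ.2])
        · rw [uIcc_of_le hu] at hξ
          exact mul_ne_zero (by positivity) (hu0.trans_le hξ.1).ne'
        · rw [uIcc_of_le hu, uIcc_of_le (by linarith)]
          exact Icc_subset_Icc_right (by norm_num)
    _ ≤ Phi u := integral_mono_interval le_rfl hu (by norm_num)
        (Eventually.of_forall fun _ => inv_nonneg.2 (sqrt_nonneg _)) hint

theorem tendsto_Phi_nhdsGT_zero : Tendsto Phi (𝓝[>] 0) atTop := by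
  have hlog : Tendsto (fun u : ℝ => (√2)⁻¹ * log ((1 / 2) / u)) (𝓝[>] 0) atTop := by
    refine ((tendsto_log_atTop.comp (tendsto_inv_nhdsGT_zero.const_mul_atTop one_half_pos))
      |>.const_mul_atTop (inv_pos.2 (sqrt_pos.2 two_pos))).congr fun u => ?_
    simp only [Function.comp_apply, div_eq_mul_inv]
  refine tendsto_atTop_mono' _ ?_ hlog
  filter_upwards [Ioo_mem_nhdsGT one_half_pos] with u hu
  exact inv_sqrt_two_mul_log_le_Phi hu.1 hu.2.le

theorem cusp_implicit_function_welldefined :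
    (∀ u ∈ Set.Ioo (0 : ℝ) 1,
      IntervalIntegrable (fun ξ : ℝ => (Real.sqrt (-Real.log (1 - ξ ^ 2)))⁻¹)
        volume u 1) ∧
    StrictAntiOn Phi (Set.Ioo (0 : ℝ) 1) ∧
    ContinuousOn Phi (Set.Ioo (0 : ℝ) 1) ∧
    Set.BijOn Phi (Set.Ioo (0 : ℝ) 1) (Set.Ioi (0 : ℝ)) := by
  have hint : ∀ u ∈ Ioo (0 : ℝ) 1, IntervalIntegrable phiIntegrand volume u 1 :=
    fun u hu => intervalIntegrable_phiIntegrand (Ioo_subset_Ioc_self hu)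
  exact ⟨hint,
    strictAntiOn_integral_left continuousOn_phiIntegrand (fun _ => phiIntegrand_pos) hint,
    continuousOn_integral_left continuousOn_phiIntegrand hint,
    bijOn_integral_left_Ioi continuousOn_phiIntegrand (fun _ => phiIntegrand_pos) hint one_pos
      tendsto_Phi_nhdsGT_zero⟩
end
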